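/- arXiv:1612.01189 — 6 statements merged into one kernel-verified Lean document; each statement's English description precedes it below -/
import Mathlib

section
/- Let A be an n×n complex positive semidefinite matrix such that det(Iₙ + A) = 1 + tr(A). Then rank(A) ≤ 1. -/
/-!
Diagonalizing `A`, with eigenvalues `λᵢ ≥ 0`, turns the hypothesis into
`∏ (1 + λᵢ) = 1 + ∑ λᵢ`. Expanding the product, the left side also contains `λᵢ λⱼ` for any
`i ≠ j`, so two nonzero eigenvalues would make it strictly larger.
-/

open Matrix ComplexOrder

namespace Finset

variable {ι R : Type*} [CommSemiring R] [PartialOrder R] [IsOrderedRing R] {f : ι → R}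

theorem one_add_sum_le_prod_one_add (s : Finset ι) (hf : ∀ i ∈ s, 0 ≤ f i) :
    1 + ∑ i ∈ s, f i ≤ ∏ i ∈ s, (1 + f i) := by
  induction s using Finset.cons_induction with
  | empty => simp
  | cons a s ha ih =>
    have hs : ∀ i ∈ s, 0 ≤ f i := fun i hi => hf i (mem_cons_of_mem hi)
    have ha : 0 ≤ f a := hf a (mem_cons_self a s)
    rw [sum_cons, prod_cons]
    calc 1 + (f a + ∑ i ∈ s, f i)
        ≤ 1 + (f a + ∑ i ∈ s, f i) + f a * ∑ i ∈ s, f i :=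
          le_add_of_nonneg_right (mul_nonneg ha (sum_nonneg hs))
      _ = (1 + f a) * (1 + ∑ i ∈ s, f i) := by ring
      _ ≤ (1 + f a) * ∏ i ∈ s, (1 + f i) :=
          mul_le_mul_of_nonneg_left (ih hs) (add_nonneg zero_le_one ha)

theorem one_add_sum_add_mul_le_prod_one_add [DecidableEq ι] {s : Finset ι} (hf : ∀ i ∈ s, 0 ≤ f i) {i j : ι}
    (hi : i ∈ s) (hj : j ∈ s) (hij : i ≠ j) :
    1 + ∑ k ∈ s, f k + f i * f j ≤ ∏ k ∈ s, (1 + f k) := by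
  have hrest : ∀ k ∈ s.erase i, 0 ≤ f k := fun k hk => hf k (mem_of_mem_erase hk)
  have hj' : f j ≤ ∑ k ∈ s.erase i, f k := single_le_sum hrest (mem_erase.mpr ⟨hij.symm, hj⟩)
  rw [← add_sum_erase s f hi, ← mul_prod_erase s (fun k => 1 + f k) hi]
  calc 1 + (f i + ∑ k ∈ s.erase i, f k) + f i * f j
      ≤ 1 + (f i + ∑ k ∈ s.erase i, f k) + f i * ∑ k ∈ s.erase i, f k := by
        gcongr
        exact hf i hi
    _ = (1 + f i) * (1 + ∑ k ∈ s.erase i, f k) := by ring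
    _ ≤ (1 + f i) * ∏ k ∈ s.erase i, (1 + f k) :=
        mul_le_mul_of_nonneg_left (one_add_sum_le_prod_one_add _ hrest)
          (add_nonneg zero_le_one (hf i hi))

end Finset

theorem Fintype.card_ne_zero_le_one_of_prod_one_add_eq {ι R : Type*} [Fintype ι] [CommRing R]
    [LinearOrder R] [IsStrictOrderedRing R] {f : ι → R} (hf : ∀ i, 0 ≤ f i)
    (h : ∏ i, (1 + f i) = 1 + ∑ i, f i) :
    Fintype.card {i // f i ≠ 0} ≤ 1 := by
  classical
  refine Fintype.card_le_one_iff.mpr fun ⟨i, hi⟩ ⟨j, hj⟩ => Subtype.ext ?_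
  by_contra hij
  have hle := Finset.one_add_sum_add_mul_le_prod_one_add (fun k _ => hf k)
    (Finset.mem_univ i) (Finset.mem_univ j) hij
  have hpos : 0 < f i * f j := mul_pos ((hf i).lt_of_ne' hi) ((hf j).lt_of_ne' hj)
  linarith

theorem Matrix.IsHermitian.det_one_add {n 𝕜 : Type*} [Fintype n] [DecidableEq n] [RCLike 𝕜]
    {A : Matrix n n 𝕜} (hA : A.IsHermitian) :
    (1 + A).det = ∏ i, (1 + (hA.eigenvalues i : 𝕜)) := by
  set U : Matrix n n 𝕜 := ↑hA.eigenvectorUnitary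
  have hA' : A = U * diagonal (RCLike.ofReal ∘ hA.eigenvalues) * star U := by
    simpa only [Unitary.conjStarAlgAut_apply] using hA.spectral_theorem
  conv_lhs => rw [hA']
  rw [det_one_add_mul_comm, ← mul_assoc, Unitary.coe_star_mul_self, one_mul,
    ← diagonal_one, diagonal_add, det_diagonal]
  rfl

/-- For an `n × n` complex positive semidefinite matrix `A`, if
`det (I + A) = 1 + tr A`, then `rank A ≤ 1`. -/
theorem rank_le_one_of_det_one_add_eq_one_add_trace (n : ℕ)
    (A : Matrix (Fin n) (Fin n) ℂ) (hA : A.PosSemidef)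
    (hdet : (1 + A).det = 1 + A.trace) :
    A.rank ≤ 1 := by
  have hH := hA.isHermitian
  have heig : ∏ i, (1 + hH.eigenvalues i) = 1 + ∑ i, hH.eigenvalues i := by
    rw [hH.det_one_add, hH.trace_eq_sum_eigenvalues] at hdet
    apply Complex.ofReal_injective
    push_cast
    exact hdet
  rw [hH.rank_eq_card_non_zero_eigs]
  exact Fintype.card_ne_zero_le_one_of_prod_one_add_eq hA.eigenvalues_nonneg heig
end

section
/- Let W be an n×n complex positive semidefinite matrix, G an n×e complex matrix, σ > 0 and R ≥ 0 real numbers. If det(I_e + σ⁻² Gᴴ W G) ≤ 2^R, then tr(Gᴴ W G) ≤ σ² (2^R − 1). -/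
open Matrix ComplexOrder

lemma aux_one_add_sum_le_prod {ι : Type*} (s : Finset ι) (f : ι → ℝ)
    (hf : ∀ i ∈ s, 0 ≤ f i) :
    1 + ∑ i ∈ s, f i ≤ ∏ i ∈ s, (1 + f i) := by
  induction s using Finset.cons_induction with
  | empty => simp
  | cons a s ha ih =>
    rw [Finset.sum_cons, Finset.prod_cons]
    have h1 : 0 ≤ f a := hf a (Finset.mem_cons_self _ _)
    have h2 := ih fun i hi => hf i (Finset.mem_cons_of_mem hi)
    have hs : 0 ≤ ∑ i ∈ s, f i :=
      Finset.sum_nonneg fun i hi => hf i (Finset.mem_cons_of_mem hi)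
    nlinarith

/-- Let `W` be an `n × n` complex PSD matrix, `G` an `n × e` complex matrix,
`σ > 0` and `R ≥ 0`. If `det (I + σ⁻² Gᴴ W G) ≤ 2 ^ R` then
`tr (Gᴴ W G) ≤ σ² (2 ^ R - 1)`. -/
theorem trace_le_of_det_le (n e : ℕ) (W : Matrix (Fin n) (Fin n) ℂ)
    (hW : W.PosSemidef) (G : Matrix (Fin n) (Fin e) ℂ) (σ R : ℝ)
    (hσ : 0 < σ) (hR : 0 ≤ R)
    (hdet : ((1 : Matrix (Fin e) (Fin e) ℂ)
        + (((σ ^ 2)⁻¹ : ℝ) : ℂ) • (Gᴴ * W * G)).det ≤ (((2 : ℝ) ^ R : ℝ) : ℂ)) :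
    (Gᴴ * W * G).trace.re ≤ σ ^ 2 * ((2 : ℝ) ^ R - 1) := by
  set M := Gᴴ * W * G with hMdef
  have hM : M.PosSemidef := hW.conjTranspose_mul_mul_same G
  set c : ℝ := (σ ^ 2)⁻¹ with hcdef
  have hc : 0 < c := by positivity
  have hH : M.IsHermitian := hM.isHermitian
  set lam := hH.eigenvalues with hlam
  have hlam0 : ∀ i, 0 ≤ lam i := hM.eigenvalues_nonneg
  set U : Matrix (Fin e) (Fin e) ℂ := (hH.eigenvectorUnitary : Matrix (Fin e) (Fin e) ℂ)
    with hU
  have hUU : U * star U = 1 := (Matrix.mem_unitaryGroup_iff).mp hH.eigenvectorUnitary.2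
  have hUU' : star U * U = 1 := (Matrix.mem_unitaryGroup_iff').mp hH.eigenvectorUnitary.2
  have hspec : M = U * diagonal (RCLike.ofReal ∘ lam) * star U := hH.spectral_theorem
  -- determinant computation
  have hconj : (1 : Matrix (Fin e) (Fin e) ℂ) + (c : ℂ) • M
      = U * ((1 : Matrix (Fin e) (Fin e) ℂ) + (c : ℂ) • diagonal (RCLike.ofReal ∘ lam)) * star U := by
    rw [Matrix.mul_add, Matrix.add_mul, Matrix.mul_one, hUU, Matrix.mul_smul,
      Matrix.smul_mul, ← hspec]
  have hdeteq : ((1 : Matrix (Fin e) (Fin e) ℂ) + (c : ℂ) • M).det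
      = ∏ i, ((1 + c * lam i : ℝ) : ℂ) := by
    rw [hconj, det_mul, det_mul, mul_comm, ← mul_assoc, ← det_mul, hUU', det_one, one_mul]
    have : (1 : Matrix (Fin e) (Fin e) ℂ) + (c : ℂ) • diagonal (RCLike.ofReal ∘ lam)
        = diagonal (fun i => ((1 + c * lam i : ℝ) : ℂ)) := by
      rw [← diagonal_one, ← diagonal_smul, diagonal_add]
      congr 1
      funext i
      simp [Complex.ofReal_add, Complex.ofReal_mul]
    rw [this, det_diagonal]
  -- trace computation
  have htr : M.trace = ((∑ i, lam i : ℝ) : ℂ) := by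
    rw [hspec, trace_mul_cycle, hUU', one_mul, trace_diagonal]
    push_cast
    simp
  -- convert the determinant hypothesis to a real inequality
  have hreal : ∏ i, (1 + c * lam i) ≤ (2 : ℝ) ^ R := by
    have := hdet
    rw [hdeteq, ← Complex.ofReal_prod] at this
    exact_mod_cast this
  have hsum : 1 + c * ∑ i, lam i ≤ (2 : ℝ) ^ R := by
    have h1 : 1 + ∑ i, c * lam i ≤ ∏ i, (1 + c * lam i) :=
      aux_one_add_sum_le_prod Finset.univ (fun i => c * lam i)
        (fun i _ => mul_nonneg hc.le (hlam0 i))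
    rw [← Finset.mul_sum] at h1
    linarith
  have htrre : M.trace.re = ∑ i, lam i := by rw [htr]; simp
  rw [htrre]
  have hσ2 : (0 : ℝ) < σ ^ 2 := by positivity
  have hcσ : c = (σ ^ 2)⁻¹ := hcdef
  rw [hcσ] at hsum
  have := mul_le_mul_of_nonneg_left hsum hσ2.le
  rw [mul_add, mul_one, ← mul_assoc, mul_inv_cancel₀ hσ2.ne', one_mul] at this
  linarith
end

section
/- Let W be an n×n complex positive semidefinite matrix with rank(W) ≤ 1, G an n×e complex matrix, σ > 0 and R ≥ 0 real numbers. Then det(I_e + σ⁻² Gᴴ W G) ≤ 2^R if and only if Gᴴ W G ⪯ σ² (2^R − 1) · I_e. -/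
/-!
`A = Gᴴ W G` is positive semidefinite of rank at most one, so at most one of its eigenvalues `μᵢ`
is nonzero. Hence `det (1 + c A) = ∏ (1 + c μᵢ) = 1 + c ∑ μᵢ`, while `t • 1 - A` is positive
semidefinite iff every `μᵢ ≤ t`, i.e. (for `t ≥ 0`) iff `∑ μᵢ ≤ t`.
-/

open Matrix ComplexOrder
open scoped MatrixOrder

namespace Matrix.IsHermitian

variable {𝕜 n : Type*} [RCLike 𝕜] [Fintype n] [DecidableEq n] {A : Matrix n n 𝕜}

lemma det_cfc (hA : A.IsHermitian) (f : ℝ → ℝ) :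
    (cfc f A).det = ∏ i, (f (hA.eigenvalues i) : 𝕜) := by
  simp [hA.cfc_eq, IsHermitian.cfc, -Unitary.conjStarAlgAut_apply]

lemma det_one_add_smul (hA : A.IsHermitian) (c : ℝ) :
    (1 + (c : 𝕜) • A).det = ∏ i, ((1 + c * hA.eigenvalues i : ℝ) : 𝕜) := by
  have hcfc : cfc (fun x => 1 + c * x) A = 1 + (c : 𝕜) • A := by
    rw [cfc_const_add 1 (fun x => c * x) A, cfc_const_mul_id c A, map_one,
      RCLike.real_smul_eq_coe_smul (K := 𝕜) c A]
  rw [← hcfc, hA.det_cfc]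

lemma posSemidef_smul_one_sub_iff (hA : A.IsHermitian) (t : ℝ) :
    ((t : 𝕜) • 1 - A).PosSemidef ↔ ∀ i, hA.eigenvalues i ≤ t := by
  rw [← le_iff, ← RCLike.real_smul_eq_coe_smul (K := 𝕜), ← Algebra.algebraMap_eq_smul_one,
    le_algebraMap_iff_spectrum_le, hA.spectrum_real_eq_range_eigenvalues, Set.forall_mem_range]

lemma support_eigenvalues_subsingleton (hA : A.IsHermitian) (h : A.rank ≤ 1) :
    (Function.support hA.eigenvalues).Subsingleton := by
  rw [hA.rank_eq_card_non_zero_eigs, Fintype.card_le_one_iff_subsingleton] at h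
  exact Set.subsingleton_coe _ |>.mp h

end Matrix.IsHermitian

section SubsingletonSupport

variable {ι : Type*} [Fintype ι]

lemma Fintype.prod_one_add_mul_eq_one_add_mul_sum {R : Type*} [CommSemiring R] {f : ι → R}
    (hf : (Function.support f).Subsingleton) (c : R) :
    ∏ i, (1 + c * f i) = 1 + c * ∑ i, f i := by
  obtain h | ⟨i, hi⟩ := hf.eq_empty_or_singleton
  · simp [Function.support_eq_empty_iff.mp h]
  · have hzero : ∀ j ≠ i, f j = 0 := fun j hj => Function.notMem_support.mp (hi ▸ hj)
    rw [Fintype.prod_eq_single i (fun j hj => by simp [hzero j hj]),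
      Fintype.sum_eq_single i hzero]

lemma Fintype.sum_le_iff_forall_le_of_support_subsingleton {f : ι → ℝ}
    (hf : (Function.support f).Subsingleton) (hf₀ : ∀ i, 0 ≤ f i) {t : ℝ} (ht : 0 ≤ t) :
    ∑ i, f i ≤ t ↔ ∀ i, f i ≤ t := by
  refine ⟨fun h i => (Finset.single_le_sum (fun j _ => hf₀ j) (Finset.mem_univ i)).trans h,
    fun h => ?_⟩
  obtain h' | ⟨i, hi⟩ := hf.eq_empty_or_singleton
  · simpa [Function.support_eq_empty_iff.mp h'] using ht
  · rw [Fintype.sum_eq_single i fun j hj => Function.notMem_support.mp (hi ▸ hj)]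
    exact h i

end SubsingletonSupport

/-- Let `W` be an `n × n` complex PSD matrix with `rank W ≤ 1`, `G` an `n × e`
complex matrix, `σ > 0` and `R ≥ 0`. Then `det (I + σ⁻² Gᴴ W G) ≤ 2 ^ R` if
and only if `Gᴴ W G ⪯ σ² (2 ^ R - 1) • I`. -/
theorem det_le_iff_loewner_of_rank_le_one (n e : ℕ) (W : Matrix (Fin n) (Fin n) ℂ)
    (hW : W.PosSemidef) (hrank : W.rank ≤ 1) (G : Matrix (Fin n) (Fin e) ℂ)
    (σ R : ℝ) (hσ : 0 < σ) (hR : 0 ≤ R) :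
    ((1 : Matrix (Fin e) (Fin e) ℂ)
        + (((σ ^ 2)⁻¹ : ℝ) : ℂ) • (Gᴴ * W * G)).det ≤ (((2 : ℝ) ^ R : ℝ) : ℂ) ↔
      (((σ ^ 2 * ((2 : ℝ) ^ R - 1) : ℝ) : ℂ) • (1 : Matrix (Fin e) (Fin e) ℂ)
        - Gᴴ * W * G).PosSemidef := by
  have hA : (Gᴴ * W * G).PosSemidef := hW.conjTranspose_mul_mul_same G
  have hsupp := hA.1.support_eigenvalues_subsingleton
    ((rank_mul_le_left _ G).trans ((rank_mul_le_right Gᴴ W).trans hrank))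
  have hσ2 : 0 < σ ^ 2 := by positivity
  have ht : 0 ≤ σ ^ 2 * ((2 : ℝ) ^ R - 1) :=
    mul_nonneg hσ2.le (sub_nonneg.mpr (Real.one_le_rpow one_le_two hR))
  have hdet := hA.1.det_one_add_smul (σ ^ 2)⁻¹
  have hpsd := hA.1.posSemidef_smul_one_sub_iff (σ ^ 2 * ((2 : ℝ) ^ R - 1))
  rw [RCLike.ofReal_eq_complex_ofReal] at hdet hpsd
  rw [hdet, ← Complex.ofReal_prod, Complex.real_le_real,
    Fintype.prod_one_add_mul_eq_one_add_mul_sum hsupp, hpsd,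
    ← Fintype.sum_le_iff_forall_le_of_support_subsingleton hsupp hA.eigenvalues_nonneg ht,
    ← le_sub_iff_add_le', inv_mul_le_iff₀ hσ2]
end

section
/- Let W, B, Θ, H be n×n complex matrices and λ a real number, where W is positive semidefinite, B is positive definite, Θ is positive semidefinite, rank(H) ≤ 1, B = 2λ·H + Θ, and W·Θ = 0. Then rank(W) ≤ 1. -/
open Matrix ComplexOrder

/-- KKT rank-reduction step: if `W` is PSD, `B` is positive definite, `Θ` is PSD,
`rank H ≤ 1`, `B = 2λ • H + Θ` and `W * Θ = 0`, then `rank W ≤ 1`. -/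
theorem rank_le_one_of_kkt (n : ℕ) (W B Θ H : Matrix (Fin n) (Fin n) ℂ) (lam : ℝ)
    (hW : W.PosSemidef) (hB : B.PosDef) (hΘ : Θ.PosSemidef) (hH : H.rank ≤ 1)
    (hBe : B = ((2 * lam : ℝ) : ℂ) • H + Θ) (hWΘ : W * Θ = 0) :
    W.rank ≤ 1 := by
  have hdet : IsUnit B.det := hB.det_pos.ne'.isUnit
  have h1 : W * B = (((2 * lam : ℝ) : ℂ) • W) * H := by
    rw [hBe, Matrix.mul_add, hWΘ, add_zero, Matrix.mul_smul, Matrix.smul_mul]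
  calc W.rank = (W * B).rank := (Matrix.rank_mul_eq_left_of_isUnit_det B W hdet).symm
    _ ≤ H.rank := by rw [h1]; exact Matrix.rank_mul_le_right _ _
    _ ≤ 1 := hH
end

section
/- In the secure-delivery setup, suppose the family (w_ρ)_{ρ∈S} of vectors in ℂⁿ is R0-feasible. Then the family of matrices W_ρ := w_ρ w_ρᴴ is R1-feasible (in particular each W_ρ is PSD with rank(W_ρ) ≤ 1), and Σ_{ρ∈S} tr(W_ρ) = Σ_{ρ∈S} ‖w_ρ‖². -/
open Matrix ComplexOrder Finset

/-! Evaluated at `W_ρ = w_ρ w_ρᴴ`, each constraint of R1 is the corresponding constraint of R0,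
because traces against rank-one matrices are quadratic forms: `tr(Λ w wᴴ) = wᴴ Λ w` and
`tr(w wᴴ h hᴴ) = |hᴴ w|²`. For the secrecy constraint put `v = Gᴴ w`: the matrix determinant
lemma gives `det(I + σe⁻² v vᴴ) = 1 + σe⁻² ‖v‖²`, so C7 says `‖v‖² ≤ σe² κ`, and by
Cauchy–Schwarz `a I - v vᴴ` is PSD as soon as `‖v‖² ≤ a`. -/

/-- Outer product `w wᴴ` of a complex column vector with its conjugate transpose. -/
def outerProd {n : ℕ} (w : Fin n → ℂ) : Matrix (Fin n) (Fin n) ℂ :=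
  Matrix.vecMulVec w (star w)

/-- R0-feasibility of a family of beamforming vectors `(w_ρ)_{ρ ∈ S}`:
per-BS big-M power constraints C4, per-BS power constraints C5, the QoS
constraints C6 in affine form, and the secrecy constraints C7. -/
def R0Feasible {n Ne : ℕ} {M S : Type*} [Fintype M] [Fintype S] [DecidableEq S]
    (Λ : M → Matrix (Fin n) (Fin n) ℂ) (P : M → ℝ) (q : M → S → ℝ)
    (hch : S → Fin n → ℂ) (G : Matrix (Fin n) (Fin Ne) ℂ)
    (σ2 σe2 : ℝ) (κreq κtol : S → ℝ) (w : S → Fin n → ℂ) : Prop :=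
  (∀ m ρ, (star (w ρ) ⬝ᵥ (Λ m) *ᵥ (w ρ)).re ≤ q m ρ * P m) ∧
  (∀ m, ∑ ρ : S, (star (w ρ) ⬝ᵥ (Λ m) *ᵥ (w ρ)).re ≤ P m) ∧
  (∀ ρ : S, σ2 + ∑ ρ' ∈ Finset.univ.erase ρ, ‖star (hch ρ) ⬝ᵥ w ρ'‖ ^ 2
      ≤ (κreq ρ)⁻¹ * ‖star (hch ρ) ⬝ᵥ w ρ‖ ^ 2) ∧
  (∀ ρ : S, ((1 : Matrix (Fin Ne) (Fin Ne) ℂ)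
      + ((σe2⁻¹ : ℝ) : ℂ) • (Gᴴ * outerProd (w ρ) * G)).det
        ≤ ((1 + κtol ρ : ℝ) : ℂ))

/-- R1-feasibility of a family of PSD matrices `(W_ρ)_{ρ ∈ S}`: the SDP
relaxation of R0 with constraints C4–C7 rewritten linearly in `W_ρ`. -/
def R1Feasible {n Ne : ℕ} {M S : Type*} [Fintype M] [Fintype S] [DecidableEq S]
    (Λ : M → Matrix (Fin n) (Fin n) ℂ) (P : M → ℝ) (q : M → S → ℝ)
    (hch : S → Fin n → ℂ) (G : Matrix (Fin n) (Fin Ne) ℂ)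
    (σ2 σe2 : ℝ) (κreq κtol : S → ℝ) (W : S → Matrix (Fin n) (Fin n) ℂ) : Prop :=
  (∀ ρ : S, (W ρ).PosSemidef) ∧
  (∀ m ρ, ((Λ m * W ρ).trace).re ≤ q m ρ * P m) ∧
  (∀ m, ∑ ρ : S, ((Λ m * W ρ).trace).re ≤ P m) ∧
  (∀ ρ : S, σ2 + ∑ ρ' ∈ Finset.univ.erase ρ, ((W ρ' * outerProd (hch ρ)).trace).re
      ≤ (κreq ρ)⁻¹ * ((W ρ * outerProd (hch ρ)).trace).re) ∧
  (∀ ρ : S, (((σe2 * κtol ρ : ℝ) : ℂ) • (1 : Matrix (Fin Ne) (Fin Ne) ℂ)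
      - Gᴴ * W ρ * G).PosSemidef)

namespace Matrix

variable {ι R : Type*} [Fintype ι]

theorem trace_mul_vecMulVec [CommSemiring R] (A : Matrix ι ι R) (x y : ι → R) :
    (A * vecMulVec x y).trace = y ⬝ᵥ (A *ᵥ x) := by
  rw [mul_vecMulVec, trace_vecMulVec, dotProduct_comm]

theorem det_one_add_vecMulVec [CommRing R] [DecidableEq ι] (x y : ι → R) :
    (1 + vecMulVec x y).det = 1 + y ⬝ᵥ x := by
  rw [vecMulVec_eq Unit, det_one_add_replicateCol_mul_replicateRow]

theorem conjTranspose_mul_vecMulVec_star_mul {κ : Type*} [CommRing R] [StarRing R]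
    (G : Matrix ι κ R) (v : ι → R) :
    Gᴴ * vecMulVec v (star v) * G = vecMulVec (Gᴴ *ᵥ v) (star (Gᴴ *ᵥ v)) := by
  rw [mul_vecMulVec, vecMulVec_mul, star_mulVec, conjTranspose_conjTranspose]

theorem re_dotProduct_star_self (v : ι → ℂ) : (v ⬝ᵥ star v).re = ∑ i, ‖v i‖ ^ 2 := by
  simp only [dotProduct, Pi.star_apply, Complex.star_def, Complex.mul_conj', Complex.re_sum]
  norm_cast

theorem trace_vecMulVec_star_mul_vecMulVec_star (u h : ι → ℂ) :
    (vecMulVec u (star u) * vecMulVec h (star h)).trace = ((‖star h ⬝ᵥ u‖ ^ 2 : ℝ) : ℂ) := by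
  rw [trace_mul_vecMulVec, vecMulVec_mulVec, dotProduct_smul, op_smul_eq_smul, smul_eq_mul,
    star_dotProduct u h, mul_comm, Complex.star_def, Complex.mul_conj']
  norm_cast

theorem star_dotProduct_mul_star_dotProduct_le (x u : ι → ℂ) :
    (star x ⬝ᵥ u) * (star u ⬝ᵥ x) ≤ (star u ⬝ᵥ u) * (star x ⬝ᵥ x) := by
  have hself (y : ι → ℂ) : star y ⬝ᵥ y = ((‖WithLp.toLp 2 y‖ ^ 2 : ℝ) : ℂ) := by
    rw [dotProduct_comm, ← EuclideanSpace.inner_toLp_toLp, inner_self_eq_norm_sq_to_K]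
    norm_cast
  set X := WithLp.toLp 2 x
  set U := WithLp.toLp 2 u
  have hXU : star x ⬝ᵥ u = inner ℂ X U := by
    rw [EuclideanSpace.inner_toLp_toLp, dotProduct_comm]
  calc (star x ⬝ᵥ u) * (star u ⬝ᵥ x) = inner ℂ X U * star (inner ℂ X U) := by
        rw [star_dotProduct u x, hXU]
    _ = ((‖inner ℂ X U‖ ^ 2 : ℝ) : ℂ) := by
        rw [Complex.star_def, Complex.mul_conj']; norm_cast
    _ ≤ ((‖U‖ ^ 2 * ‖X‖ ^ 2 : ℝ) : ℂ) := by
        rw [Complex.real_le_real, ← mul_pow, mul_comm]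
        exact pow_le_pow_left₀ (norm_nonneg _) (norm_inner_le_norm X U) 2
    _ = (star u ⬝ᵥ u) * (star x ⬝ᵥ x) := by
        rw [hself, hself]; push_cast; rfl

theorem posSemidef_smul_one_sub_vecMulVec_star [DecidableEq ι] {a : ℂ} {v : ι → ℂ}
    (h : star v ⬝ᵥ v ≤ a) : (a • 1 - vecMulVec v (star v)).PosSemidef := by
  -- in `ComplexOrder`, `0 ≤ a` forces `a` to be real
  have ha : IsSelfAdjoint a := IsSelfAdjoint.of_nonneg ((dotProduct_star_self_nonneg v).trans h)
  refine PosSemidef.of_dotProduct_mulVec_nonneg ?_ fun x => ?_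
  · exact (isHermitian_one.smul ha).sub (posSemidef_vecMulVec_self_star v).isHermitian
  · have hquad : star x ⬝ᵥ ((a • 1 - vecMulVec v (star v)) *ᵥ x)
        = a * (star x ⬝ᵥ x) - (star x ⬝ᵥ v) * (star v ⬝ᵥ x) := by
      simp [sub_mulVec, smul_mulVec, vecMulVec_mulVec, dotProduct_sub, mul_comm]
    rw [hquad, sub_nonneg]
    exact (star_dotProduct_mul_star_dotProduct_le x v).trans
      (mul_le_mul_of_nonneg_right h (dotProduct_star_self_nonneg x))

theorem posSemidef_smul_one_sub_vecMulVec_star_of_det_le [DecidableEq ι] {c κ : ℝ} (hc : 0 < c)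
    {v : ι → ℂ} (h : (1 + ((c⁻¹ : ℝ) : ℂ) • vecMulVec v (star v)).det ≤ ((1 + κ : ℝ) : ℂ)) :
    (((c * κ : ℝ) : ℂ) • 1 - vecMulVec v (star v)).PosSemidef := by
  rw [← smul_vecMulVec, det_one_add_vecMulVec, dotProduct_smul, smul_eq_mul, Complex.ofReal_add,
    Complex.ofReal_one, add_le_add_iff_left] at h
  have hc' : (0 : ℂ) < c := by exact_mod_cast hc
  refine posSemidef_smul_one_sub_vecMulVec_star ?_
  calc star v ⬝ᵥ v = c * ((c⁻¹ : ℝ) * (star v ⬝ᵥ v)) := by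
        rw [← mul_assoc, Complex.ofReal_inv, mul_inv_cancel₀ hc'.ne', one_mul]
    _ ≤ ((c * κ : ℝ) : ℂ) := by
        rw [Complex.ofReal_mul]; exact mul_le_mul_of_nonneg_left h hc'.le

end Matrix

theorem r1Feasible_of_r0Feasible_general {M S : Type*} [Fintype M] [Fintype S] [DecidableEq S]
    (Ne n : ℕ)
    (Λ : M → Matrix (Fin n) (Fin n) ℂ) (P : M → ℝ) (q : M → S → ℝ)
    (hch : S → Fin n → ℂ) (G : Matrix (Fin n) (Fin Ne) ℂ)
    (σ2 σe2 : ℝ) (κreq κtol : S → ℝ)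
    (hσe2 : 0 < σe2)
    (w : S → Fin n → ℂ)
    (hw : R0Feasible Λ P q hch G σ2 σe2 κreq κtol w) :
    R1Feasible Λ P q hch G σ2 σe2 κreq κtol (fun ρ => outerProd (w ρ)) ∧
      (∀ ρ : S, (outerProd (w ρ)).rank ≤ 1) ∧
      ∑ ρ : S, ((outerProd (w ρ)).trace).re = ∑ ρ : S, ∑ i : Fin n, ‖w ρ i‖ ^ 2 := by
  obtain ⟨hpower, hpowerSum, hqos, hsecrecy⟩ := hw
  simp only [R1Feasible, outerProd, conjTranspose_mul_vecMulVec_star_mul] at hsecrecy ⊢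
  refine ⟨⟨fun ρ => posSemidef_vecMulVec_self_star _, fun m ρ => ?_, fun m => ?_, fun ρ => ?_,
    fun ρ => ?_⟩, fun ρ => rank_vecMulVec_le _ _, ?_⟩
  · simpa only [trace_mul_vecMulVec] using hpower m ρ
  · simpa only [trace_mul_vecMulVec] using hpowerSum m
  · simpa only [trace_vecMulVec_star_mul_vecMulVec_star, Complex.ofReal_re] using hqos ρ
  · exact posSemidef_smul_one_sub_vecMulVec_star_of_det_le hσe2 (hsecrecy ρ)
  · simp only [trace_vecMulVec, re_dotProduct_star_self]

/-- If `(w_ρ)_{ρ∈S}` is R0-feasible, then the rank-one family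
`W_ρ = w_ρ w_ρᴴ` is R1-feasible (each `W_ρ` PSD of rank ≤ 1), and
`Σ_ρ tr W_ρ = Σ_ρ ‖w_ρ‖²`. -/
theorem r1Feasible_of_r0Feasible {M S : Type*} [Fintype M] [Fintype S] [DecidableEq S]
    (Nt Ne n : ℕ) (hNt : 0 < Nt) (hNe : 0 < Ne) (hn : n = Fintype.card M * Nt)
    (Λ : M → Matrix (Fin n) (Fin n) ℂ) (P : M → ℝ) (q : M → S → ℝ)
    (hch : S → Fin n → ℂ) (G : Matrix (Fin n) (Fin Ne) ℂ)
    (σ2 σe2 : ℝ) (κreq κtol : S → ℝ)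
    (hΛdiag : ∀ m, ∀ i j : Fin n, i ≠ j → Λ m i j = 0)
    (hΛ01 : ∀ m, ∀ i : Fin n, Λ m i i = 0 ∨ Λ m i i = 1)
    (hΛsum : ∑ m : M, Λ m = 1)
    (hP : ∀ m, 0 < P m) (hq : ∀ m ρ, q m ρ = 0 ∨ q m ρ = 1)
    (hσ2 : 0 < σ2) (hσe2 : 0 < σe2)
    (hκreq : ∀ ρ, 0 < κreq ρ) (hκtol : ∀ ρ, 0 ≤ κtol ρ)
    (w : S → Fin n → ℂ)
    (hw : R0Feasible Λ P q hch G σ2 σe2 κreq κtol w) :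
    R1Feasible Λ P q hch G σ2 σe2 κreq κtol (fun ρ => outerProd (w ρ)) ∧
      (∀ ρ : S, (outerProd (w ρ)).rank ≤ 1) ∧
      ∑ ρ : S, ((outerProd (w ρ)).trace).re = ∑ ρ : S, ∑ i : Fin n, ‖w ρ i‖ ^ 2 :=
  r1Feasible_of_r0Feasible_general Ne n Λ P q hch G σ2 σe2 κreq κtol hσe2 w hw
end

section
/- In the secure-delivery setup, suppose the family (W_ρ)_{ρ∈S} of n×n PSD matrices is R1-feasible with rank(W_ρ) ≤ 1 for every ρ ∈ S, and let (w_ρ)_{ρ∈S} be vectors in ℂⁿ with W_ρ = w_ρ w_ρᴴ for every ρ. Then (w_ρ)_{ρ∈S} is R0-feasible and Σ_{ρ∈S} ‖w_ρ‖² = Σ_{ρ∈S} tr(W_ρ). -/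
open Matrix ComplexOrder Finset

/-!
A rank-one matrix `W = w wᴴ` turns every linear functional of R1 into the corresponding
quadratic expression of R0: `tr(A w wᴴ) = wᴴ A w`, `tr(w wᴴ h hᴴ) = |hᴴ w|²`, and
`Gᴴ w wᴴ G = v vᴴ` with `v = Gᴴ w`. For the secrecy constraint, the matrix determinant lemma
gives `det(I + σ⁻² v vᴴ) = 1 + σ⁻² ‖v‖²`, and testing `σ² κ I ⪰ v vᴴ` against `v` gives
`‖v‖⁴ ≤ σ² κ ‖v‖²`, i.e. `‖v‖² ≤ σ² κ`.
-/

lemma dotProduct_star_self_eq_sum_norm_sq {ι : Type*} [Fintype ι] (v : ι → ℂ) :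
    star v ⬝ᵥ v = ((∑ i, ‖v i‖ ^ 2 : ℝ) : ℂ) := by
  push_cast
  exact Finset.sum_congr rfl fun i _ => Complex.conj_mul' (v i)

section

variable {n : ℕ}

lemma re_trace_outerProd (w : Fin n → ℂ) : (outerProd w).trace.re = ∑ i, ‖w i‖ ^ 2 := by
  rw [outerProd, trace_vecMulVec, dotProduct_comm, dotProduct_star_self_eq_sum_norm_sq,
    Complex.ofReal_re]

lemma outerProd_mulVec (w h : Fin n → ℂ) : outerProd w *ᵥ h = (star w ⬝ᵥ h) • w := by
  rw [outerProd, vecMulVec_mulVec, op_smul_eq_smul]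

lemma trace_mul_outerProd (A : Matrix (Fin n) (Fin n) ℂ) (w : Fin n → ℂ) :
    (A * outerProd w).trace = star w ⬝ᵥ A *ᵥ w := by
  rw [outerProd, mul_vecMulVec, trace_vecMulVec, dotProduct_comm]

lemma trace_outerProd_mul_outerProd (w h : Fin n → ℂ) :
    (outerProd w * outerProd h).trace = ((‖star h ⬝ᵥ w‖ ^ 2 : ℝ) : ℂ) := by
  rw [trace_mul_outerProd, outerProd_mulVec, dotProduct_smul, smul_eq_mul, star_dotProduct,
    Complex.star_def, Complex.conj_mul', Complex.ofReal_pow]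

lemma conjTranspose_mul_outerProd_mul {Ne : ℕ} (G : Matrix (Fin n) (Fin Ne) ℂ) (w : Fin n → ℂ) :
    Gᴴ * outerProd w * G = outerProd (Gᴴ *ᵥ w) := by
  rw [outerProd, mul_vecMulVec, vecMulVec_mul, outerProd, star_mulVec,
    conjTranspose_conjTranspose]

lemma det_one_add_smul_outerProd (c : ℂ) (v : Fin n → ℂ) :
    (1 + c • outerProd v).det = 1 + c * (star v ⬝ᵥ v) := by
  rw [outerProd, ← smul_vecMulVec, vecMulVec_eq Unit, det_one_add_replicateCol_mul_replicateRow,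
    dotProduct_smul, smul_eq_mul]

lemma sum_norm_sq_le_of_posSemidef_smul_one_sub_outerProd {c : ℝ} (hc : 0 ≤ c) {v : Fin n → ℂ}
    (h : ((c : ℂ) • 1 - outerProd v).PosSemidef) : ∑ i, ‖v i‖ ^ 2 ≤ c := by
  set t := ∑ i, ‖v i‖ ^ 2
  have hquad : star v ⬝ᵥ ((c : ℂ) • 1 - outerProd v) *ᵥ v = (((c - t) * t : ℝ) : ℂ) := by
    rw [sub_mulVec, smul_mulVec, one_mulVec, outerProd_mulVec, dotProduct_sub, dotProduct_smul,
      dotProduct_smul, dotProduct_star_self_eq_sum_norm_sq, smul_eq_mul, smul_eq_mul]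
    push_cast [t]
    ring
  have hnonneg : 0 ≤ (c - t) * t := by
    exact_mod_cast hquad ▸ h.dotProduct_mulVec_nonneg v
  have ht : 0 ≤ t := by positivity
  nlinarith

lemma det_one_add_inv_smul_outerProd_le_of_posSemidef {σ κ : ℝ} (hσ : 0 < σ) (hκ : 0 ≤ κ)
    {v : Fin n → ℂ} (h : (((σ * κ : ℝ) : ℂ) • 1 - outerProd v).PosSemidef) :
    (1 + ((σ⁻¹ : ℝ) : ℂ) • outerProd v).det ≤ ((1 + κ : ℝ) : ℂ) := by
  have hle : σ⁻¹ * ∑ i, ‖v i‖ ^ 2 ≤ κ := by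
    rw [inv_mul_le_iff₀ hσ]
    exact sum_norm_sq_le_of_posSemidef_smul_one_sub_outerProd (by positivity) h
  rw [det_one_add_smul_outerProd, dotProduct_star_self_eq_sum_norm_sq]
  exact_mod_cast add_le_add_right hle 1

end

theorem r0Feasible_of_r1Feasible_rank_le_one_general {M S : Type*}
    [Fintype M] [Fintype S] [DecidableEq S]
    (Ne n : ℕ)
    (Λ : M → Matrix (Fin n) (Fin n) ℂ) (P : M → ℝ) (q : M → S → ℝ)
    (hch : S → Fin n → ℂ) (G : Matrix (Fin n) (Fin Ne) ℂ)
    (σ2 σe2 : ℝ) (κreq κtol : S → ℝ)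
    (hσe2 : 0 < σe2)
    (hκtol : ∀ ρ, 0 ≤ κtol ρ)
    (W : S → Matrix (Fin n) (Fin n) ℂ) (w : S → Fin n → ℂ)
    (hW : R1Feasible Λ P q hch G σ2 σe2 κreq κtol W)
    (hWw : ∀ ρ : S, W ρ = outerProd (w ρ)) :
    R0Feasible Λ P q hch G σ2 σe2 κreq κtol w ∧
      ∑ ρ : S, ∑ i : Fin n, ‖w ρ i‖ ^ 2 = ∑ ρ : S, ((W ρ).trace).re := by
  obtain rfl : W = fun ρ => outerProd (w ρ) := funext hWw
  obtain ⟨-, hC4, hC5, hC6, hC7⟩ := hW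
  refine ⟨⟨fun m ρ => ?_, fun m => ?_, fun ρ => ?_, fun ρ => ?_⟩, ?_⟩
  · simpa only [trace_mul_outerProd] using hC4 m ρ
  · simpa only [trace_mul_outerProd] using hC5 m
  · simpa only [trace_outerProd_mul_outerProd, Complex.ofReal_re] using hC6 ρ
  · rw [conjTranspose_mul_outerProd_mul]
    refine det_one_add_inv_smul_outerProd_le_of_posSemidef hσe2 (hκtol ρ) ?_
    simpa only [conjTranspose_mul_outerProd_mul] using hC7 ρ
  · simp only [re_trace_outerProd]

/-- If `(W_ρ)_{ρ∈S}` is R1-feasible with `rank W_ρ ≤ 1` and `W_ρ = w_ρ w_ρᴴ`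
for every `ρ`, then `(w_ρ)_{ρ∈S}` is R0-feasible and
`Σ_ρ ‖w_ρ‖² = Σ_ρ tr W_ρ`. -/
theorem r0Feasible_of_r1Feasible_rank_le_one {M S : Type*}
    [Fintype M] [Fintype S] [DecidableEq S]
    (Nt Ne n : ℕ) (hNt : 0 < Nt) (hNe : 0 < Ne) (hn : n = Fintype.card M * Nt)
    (Λ : M → Matrix (Fin n) (Fin n) ℂ) (P : M → ℝ) (q : M → S → ℝ)
    (hch : S → Fin n → ℂ) (G : Matrix (Fin n) (Fin Ne) ℂ)
    (σ2 σe2 : ℝ) (κreq κtol : S → ℝ)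
    (hΛdiag : ∀ m, ∀ i j : Fin n, i ≠ j → Λ m i j = 0)
    (hΛ01 : ∀ m, ∀ i : Fin n, Λ m i i = 0 ∨ Λ m i i = 1)
    (hΛsum : ∑ m : M, Λ m = 1)
    (hP : ∀ m, 0 < P m) (hq : ∀ m ρ, q m ρ = 0 ∨ q m ρ = 1)
    (hσ2 : 0 < σ2) (hσe2 : 0 < σe2)
    (hκreq : ∀ ρ, 0 < κreq ρ) (hκtol : ∀ ρ, 0 ≤ κtol ρ)
    (W : S → Matrix (Fin n) (Fin n) ℂ) (w : S → Fin n → ℂ)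
    (hW : R1Feasible Λ P q hch G σ2 σe2 κreq κtol W)
    (hrank : ∀ ρ : S, (W ρ).rank ≤ 1)
    (hWw : ∀ ρ : S, W ρ = outerProd (w ρ)) :
    R0Feasible Λ P q hch G σ2 σe2 κreq κtol w ∧
      ∑ ρ : S, ∑ i : Fin n, ‖w ρ i‖ ^ 2 = ∑ ρ : S, ((W ρ).trace).re :=
  r0Feasible_of_r1Feasible_rank_le_one_general Ne n Λ P q hch G σ2 σe2 κreq κtol hσe2 hκtol W w hW
    hWw
end
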